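/- For all integers n ≥ 3 and l₀ ≥ 1 there exists a constant c₂(n, l₀), depending only on n and l₀, such that every connected {K_n, S*_n, S̃_n}-free finite simple graph H with diam(H) ≤ l₀ satisfies insp(H) ≤ c₂(n, l₀). -/

import Mathlib

open SimpleGraph

/-- `G` contains an induced subgraph isomorphic to `H`. -/
def HasInducedCopy {V W : Type*} (G : SimpleGraph V) (H : SimpleGraph W) : Prop :=
  ∃ f : W ↪ V, ∀ a b : W, G.Adj (f a) (f b) ↔ H.Adj a b

/-- The star `K_{1,m}` (one center plus `m` leaves). -/
def starGraph (m : ℕ) : SimpleGraph (Unit ⊕ Fin m) := completeBipartiteGraph Unit (Fin m)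

/-- `S` induces in `G` a subgraph isomorphic to a path `P_m` on `m ≥ 1` vertices. -/
def IsInducedPathSet {V : Type*} (G : SimpleGraph V) (S : Set V) : Prop :=
  ∃ m : ℕ, 1 ≤ m ∧ Nonempty ((G.induce S) ≃g pathGraph m)

/-- `S` induces in `G` a subgraph isomorphic to a star `K_{1,m}` with `m ≥ 1`. -/
def IsInducedStarSet {V : Type*} (G : SimpleGraph V) (S : Set V) : Prop :=
  ∃ m : ℕ, 1 ≤ m ∧ Nonempty ((G.induce S) ≃g _root_.starGraph m)

/-- `S` consists of a single vertex (i.e. induces `K_1`). -/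
def IsSingletonSet {V : Type*} (S : Set V) : Prop := ∃ v, S = {v}

/-- `S` is the vertex set of an isometric (shortest) path of `G`. -/
def IsIsometricPathSet {V : Type*} (G : SimpleGraph V) (S : Set V) : Prop :=
  ∃ (u v : V) (p : G.Walk u v), p.IsPath ∧ p.length = G.dist u v ∧
    S = {x | x ∈ p.support}

/-- `P` is a family of sets, all satisfying `pred`, whose union is all of `V`. -/
def IsCoverBy {V : Type*} (P : Finset (Set V)) (pred : Set V → Prop) : Prop :=
  (∀ S ∈ P, pred S) ∧ ∀ v : V, ∃ S ∈ P, v ∈ S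

/-- `P` is a cover by sets satisfying `pred`, whose members are pairwise disjoint. -/
def IsPartitionBy {V : Type*} (P : Finset (Set V)) (pred : Set V → Prop) : Prop :=
  IsCoverBy P pred ∧ ∀ S ∈ P, ∀ T ∈ P, S ≠ T → ∀ v, v ∈ S → v ∉ T

/-- Minimum cardinality of a cover by sets satisfying `pred`. -/
noncomputable def coverNumber {V : Type*} (pred : Set V → Prop) : ℕ :=
  sInf {k | ∃ P : Finset (Set V), P.card = k ∧ IsCoverBy P pred}

/-- Minimum cardinality of a partition into sets satisfying `pred`. -/
noncomputable def partitionNumber {V : Type*} (pred : Set V → Prop) : ℕ :=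
  sInf {k | ∃ P : Finset (Set V), P.card = k ∧ IsPartitionBy P pred}

/-- The induced SP-cover number. -/
noncomputable def inspc {V : Type*} (G : SimpleGraph V) : ℕ :=
  coverNumber (fun S => IsInducedStarSet G S ∨ IsInducedPathSet G S)

/-- The induced SP-partition number. -/
noncomputable def inspp {V : Type*} (G : SimpleGraph V) : ℕ :=
  partitionNumber (fun S => IsInducedStarSet G S ∨ IsInducedPathSet G S)

/-- The induced star cover number. -/
noncomputable def insc {V : Type*} (G : SimpleGraph V) : ℕ :=
  coverNumber (fun S => IsInducedStarSet G S ∨ IsSingletonSet S)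

/-- The induced star partition number. -/
noncomputable def insp {V : Type*} (G : SimpleGraph V) : ℕ :=
  partitionNumber (fun S => IsInducedStarSet G S ∨ IsSingletonSet S)

/-- The induced path cover number. -/
noncomputable def inpc {V : Type*} (G : SimpleGraph V) : ℕ :=
  coverNumber (fun S => IsInducedPathSet G S)

/-- The induced path partition number. -/
noncomputable def inpp {V : Type*} (G : SimpleGraph V) : ℕ :=
  partitionNumber (fun S => IsInducedPathSet G S)

/-- The isometric path cover number. -/
noncomputable def ispc {V : Type*} (G : SimpleGraph V) : ℕ :=
  coverNumber (fun S => IsIsometricPathSet G S)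

/-- The isometric path partition number. -/
noncomputable def ispp {V : Type*} (G : SimpleGraph V) : ℕ :=
  partitionNumber (fun S => IsIsometricPathSet G S)

/-- `S*_n` : center `x = inl ()`, middle vertices `y i = inr (inl i)`,
leaves `z i = inr (inr i)`; edges `x yᵢ` and `yᵢ zᵢ`. -/
def SStar (n : ℕ) : SimpleGraph (Unit ⊕ Fin n ⊕ Fin n) :=
  SimpleGraph.fromRel (fun a b =>
    (∃ i : Fin n, a = Sum.inl () ∧ b = Sum.inr (Sum.inl i)) ∨
    (∃ i : Fin n, a = Sum.inr (Sum.inl i) ∧ b = Sum.inr (Sum.inr i)))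

/-- `S̃_n` : `S*_n` together with the edges `x zᵢ`. -/
def STilde (n : ℕ) : SimpleGraph (Unit ⊕ Fin n ⊕ Fin n) :=
  SimpleGraph.fromRel (fun a b =>
    (∃ i : Fin n, a = Sum.inl () ∧ b = Sum.inr (Sum.inl i)) ∨
    (∃ i : Fin n, a = Sum.inr (Sum.inl i) ∧ b = Sum.inr (Sum.inr i)) ∨
    (∃ i : Fin n, a = Sum.inl () ∧ b = Sum.inr (Sum.inr i)))

/-- `F⁽¹⁾_n` : vertices `x₁ = inl 0`, `x₂ = inl 1`, `yᵢ = inr (inl i)`, `zᵢ = inr (inr i)`;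
edges `x₁x₂`, `x₁y₁`, `x₁z₁`, and two paths `y₁⋯yₙ`, `z₁⋯zₙ`. -/
def F1 (n : ℕ) : SimpleGraph (Fin 2 ⊕ Fin n ⊕ Fin n) :=
  SimpleGraph.fromRel (fun a b =>
    (a = Sum.inl 0 ∧ b = Sum.inl 1) ∨
    (∃ j : Fin n, (j : ℕ) = 0 ∧ a = Sum.inl 0 ∧ b = Sum.inr (Sum.inl j)) ∨
    (∃ j : Fin n, (j : ℕ) = 0 ∧ a = Sum.inl 0 ∧ b = Sum.inr (Sum.inr j)) ∨
    (∃ i j : Fin n, (i : ℕ) + 1 = (j : ℕ) ∧ a = Sum.inr (Sum.inl i) ∧ b = Sum.inr (Sum.inl j)) ∨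
    (∃ i j : Fin n, (i : ℕ) + 1 = (j : ℕ) ∧ a = Sum.inr (Sum.inr i) ∧ b = Sum.inr (Sum.inr j)))

/-- `F⁽²⁾_n` : vertex `x₁ = inl ()`, `yᵢ = inr (inl i)`, `zᵢ = inr (inr i)`;
edges `x₁y₁`, `x₁z₁`, `y₁z₁`, and two paths `y₁⋯yₙ`, `z₁⋯zₙ`. -/
def F2 (n : ℕ) : SimpleGraph (Unit ⊕ Fin n ⊕ Fin n) :=
  SimpleGraph.fromRel (fun a b =>
    (∃ j : Fin n, (j : ℕ) = 0 ∧ a = Sum.inl () ∧ b = Sum.inr (Sum.inl j)) ∨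
    (∃ j : Fin n, (j : ℕ) = 0 ∧ a = Sum.inl () ∧ b = Sum.inr (Sum.inr j)) ∨
    (∃ i j : Fin n, (i : ℕ) = 0 ∧ (j : ℕ) = 0 ∧ a = Sum.inr (Sum.inl i) ∧ b = Sum.inr (Sum.inr j)) ∨
    (∃ i j : Fin n, (i : ℕ) + 1 = (j : ℕ) ∧ a = Sum.inr (Sum.inl i) ∧ b = Sum.inr (Sum.inl j)) ∨
    (∃ i j : Fin n, (i : ℕ) + 1 = (j : ℕ) ∧ a = Sum.inr (Sum.inr i) ∧ b = Sum.inr (Sum.inr j)))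

/-- `F⁽³⁾_n` : vertices `xᵢ = inl i`, `yᵢ = inr (inl i)`, `zᵢ = inr (inr i)`;
edges `xᵢy₁`, `xᵢz₁` for all `i`, and two paths `y₁⋯yₙ`, `z₁⋯zₙ`. -/
def F3 (n : ℕ) : SimpleGraph (Fin n ⊕ Fin n ⊕ Fin n) :=
  SimpleGraph.fromRel (fun a b =>
    (∃ (i j : Fin n), (j : ℕ) = 0 ∧ a = Sum.inl i ∧ b = Sum.inr (Sum.inl j)) ∨
    (∃ (i j : Fin n), (j : ℕ) = 0 ∧ a = Sum.inl i ∧ b = Sum.inr (Sum.inr j)) ∨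
    (∃ i j : Fin n, (i : ℕ) + 1 = (j : ℕ) ∧ a = Sum.inr (Sum.inl i) ∧ b = Sum.inr (Sum.inl j)) ∨
    (∃ i j : Fin n, (i : ℕ) + 1 = (j : ℕ) ∧ a = Sum.inr (Sum.inr i) ∧ b = Sum.inr (Sum.inr j)))

/-- `F⁽⁴⁾_n` : `F⁽³⁾_n` with only `x₁, x₂` kept (no edge `x₁x₂`). -/
def F4 (n : ℕ) : SimpleGraph (Fin 2 ⊕ Fin n ⊕ Fin n) :=
  SimpleGraph.fromRel (fun a b =>
    (∃ (i : Fin 2) (j : Fin n), (j : ℕ) = 0 ∧ a = Sum.inl i ∧ b = Sum.inr (Sum.inl j)) ∨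
    (∃ (i : Fin 2) (j : Fin n), (j : ℕ) = 0 ∧ a = Sum.inl i ∧ b = Sum.inr (Sum.inr j)) ∨
    (∃ i j : Fin n, (i : ℕ) + 1 = (j : ℕ) ∧ a = Sum.inr (Sum.inl i) ∧ b = Sum.inr (Sum.inl j)) ∨
    (∃ i j : Fin n, (i : ℕ) + 1 = (j : ℕ) ∧ a = Sum.inr (Sum.inr i) ∧ b = Sum.inr (Sum.inr j)))

/-- `F⁽⁵⁾_n` : `F⁽⁴⁾_n` plus the edge `x₁x₂`. -/
def F5 (n : ℕ) : SimpleGraph (Fin 2 ⊕ Fin n ⊕ Fin n) :=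
  SimpleGraph.fromRel (fun a b =>
    (a = Sum.inl 0 ∧ b = Sum.inl 1) ∨
    (∃ (i : Fin 2) (j : Fin n), (j : ℕ) = 0 ∧ a = Sum.inl i ∧ b = Sum.inr (Sum.inl j)) ∨
    (∃ (i : Fin 2) (j : Fin n), (j : ℕ) = 0 ∧ a = Sum.inl i ∧ b = Sum.inr (Sum.inr j)) ∨
    (∃ i j : Fin n, (i : ℕ) + 1 = (j : ℕ) ∧ a = Sum.inr (Sum.inl i) ∧ b = Sum.inr (Sum.inl j)) ∨
    (∃ i j : Fin n, (i : ℕ) + 1 = (j : ℕ) ∧ a = Sum.inr (Sum.inr i) ∧ b = Sum.inr (Sum.inr j)))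

/-- The Ramsey number `R(a,b)` : least `R` such that every simple graph on at least `R`
vertices contains a clique of size `a` or an independent set of size `b`. -/
noncomputable def ramseyNumber (a b : ℕ) : ℕ :=
  sInf {R : ℕ | ∀ (m : ℕ) (G : SimpleGraph (Fin m)), R ≤ m →
    (∃ s : Finset (Fin m), s.card = a ∧ ∀ u ∈ s, ∀ v ∈ s, u ≠ v → G.Adj u v) ∨
    (∃ s : Finset (Fin m), s.card = b ∧ ∀ u ∈ s, ∀ v ∈ s, u ≠ v → ¬ G.Adj u v)}

/-- `ξ_{n,i} = ((R(n-1,n)-1)^i - 1)/(R(n-1,n)-2)`. -/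
noncomputable def xi (n i : ℕ) : ℕ :=
  ((ramseyNumber (n - 1) n - 1) ^ i - 1) / (ramseyNumber (n - 1) n - 2)

/-!
Root the graph at a vertex `r` and look at the distance layers from `r`. A minimal subset of
layer `i + 1` dominating layer `i + 2` has private neighbours, so by Ramsey's theorem every
vertex of layer `i` sees fewer than `R(n - 1, R(n, n))` of its members: an `(n - 1)`-clique
among them would complete a `K_n`, and a large independent set together with its private
neighbours contains an induced `S*_n`. Hence a connected graph of diameter at most `l₀` has a
dominating set of size bounded in terms of `n` and `l₀`.

It remains to partition the closed neighbourhood of one vertex `c` into boundedly many induced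
stars. Since `N(c)` has no induced matching of size `n` (that would give `S̃_n`), fewer than
`2n` vertices `W ⊆ N(c)` meet the closed neighbourhood of every edge of `N(c)`. The vertices of
`N(c)` outside `N[W]` form a star with `c`, and the rest is shared among the neighbourhoods of
the `w ∈ W`, which are partitioned recursively around the larger clique `{c, w}`; after `n - 1`
rounds the clique would be a `K_n`, so the recursion stops.
-/

open Finset

namespace SimpleGraph

variable {V W : Type*} {G : SimpleGraph V}

lemma Embedding.hasInducedCopy {H : SimpleGraph W} (f : H ↪g G) : HasInducedCopy G H :=
  ⟨f.toEmbedding, fun _ _ => f.map_adj_iff⟩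

lemma cliqueFree_of_not_hasInducedCopy {n : ℕ} (h : ¬HasInducedCopy G (completeGraph (Fin n))) :
    G.CliqueFree n := by
  by_contra hK
  exact h (topEmbeddingOfNotCliqueFree hK).hasInducedCopy

lemma exists_embedding_cone {K : SimpleGraph (Unit ⊕ W)} {H : SimpleGraph W}
    (hK : ∀ a b, K.Adj (.inr a) (.inr b) ↔ H.Adj a b) (e : H ↪g G) {x : V}
    (hxe : ∀ a, x ≠ e a) (hx : ∀ a, G.Adj x (e a) ↔ K.Adj (.inl ()) (.inr a)) :
    ∃ f : K ↪g G, Set.range f = insert x (Set.range e) := by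
  have hinj : Function.Injective (Sum.elim (fun _ : Unit => x) e) := by
    rintro (⟨⟩ | a) (⟨⟩ | b) h <;> simp only [Sum.elim_inl, Sum.elim_inr] at h
    · rfl
    · exact absurd h (hxe b)
    · exact absurd h.symm (hxe a)
    · rw [e.injective h]
  refine ⟨⟨⟨_, hinj⟩, ?_⟩, ?_⟩
  · rintro (⟨⟨⟩⟩ | a) (⟨⟨⟩⟩ | b) <;> simp [hK, hx, G.adj_comm _ x, K.adj_comm _ (.inl ())]
  · change Set.range (Sum.elim _ _) = _
    rw [Set.Sum.elim_range, Set.range_const, Set.singleton_union]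

/-- The perfect matching joining `inl i` to `inr i`. -/
def matchingGraph (α : Type*) : SimpleGraph (α ⊕ α) where
  Adj a b := a.swap = b
  symm := ⟨fun a b h => by rw [← h, Sum.swap_swap]⟩
  loopless := ⟨fun a h => by cases a <;> simp at h⟩

@[simp] lemma matchingGraph_adj {α : Type*} {a b : α ⊕ α} :
    (matchingGraph α).Adj a b ↔ a.swap = b := Iff.rfl

lemma hasInducedCopy_sStar {n : ℕ} (e : matchingGraph (Fin n) ↪g G) {x : V}
    (hxe : ∀ a, x ≠ e a) (hxl : ∀ i, G.Adj x (e (.inl i))) (hxr : ∀ i, ¬G.Adj x (e (.inr i))) :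
    HasInducedCopy G (SStar n) := by
  refine (exists_embedding_cone (K := SStar n) ?_ e hxe ?_).choose.hasInducedCopy
  · rintro (i | i) (j | j) <;> simp [SStar, eq_comm]
  · rintro (i | i) <;> simp [SStar, hxl, hxr]

lemma hasInducedCopy_sTilde {n : ℕ} (e : matchingGraph (Fin n) ↪g G) {x : V}
    (hx : ∀ a, G.Adj x (e a)) : HasInducedCopy G (STilde n) := by
  refine (exists_embedding_cone (K := STilde n) ?_ e (fun a => (hx a).ne) ?_).choose.hasInducedCopy
  · rintro (i | i) (j | j) <;> simp [STilde, eq_comm]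
  · rintro (i | i) <;> simp [STilde, hx]

structure IsInducedMatching (G : SimpleGraph V) (M : Finset (V × V)) : Prop where
  adj : ∀ e ∈ M, G.Adj e.1 e.2
  far : (M : Set (V × V)).Pairwise fun e f =>
    ∀ u ∈ [e.1, e.2], ∀ v ∈ [f.1, f.2], u ≠ v ∧ ¬G.Adj u v

lemma IsInducedMatching.exists_embedding {M : Finset (V × V)} {n : ℕ}
    (hM : G.IsInducedMatching M) (hn : #M = n) :
    ∃ e : matchingGraph (Fin n) ↪g G, ∀ i, (e (.inl i), e (.inr i)) ∈ M := by
  set φ := (M.equivFinOfCardEq hn).symm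
  have hfar : ∀ i j, i ≠ j → ∀ u ∈ [(φ i).1.1, (φ i).1.2], ∀ v ∈ [(φ j).1.1, (φ j).1.2],
      u ≠ v ∧ ¬G.Adj u v := fun i j hij =>
    hM.far (φ i).2 (φ j).2 (Subtype.coe_injective.ne (φ.injective.ne hij))
  have hadj : ∀ i, G.Adj (φ i).1.1 (φ i).1.2 := fun i => hM.adj _ (φ i).2
  set g : Fin n ⊕ Fin n → V := Sum.elim (fun i => (φ i).1.1) (fun i => (φ i).1.2)
  have hg : ∀ a b, (g a = g b ↔ a = b) ∧ (G.Adj (g a) (g b) ↔ a.swap = b) := by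
    rintro (i | i) (j | j) <;> rcases eq_or_ne i j with rfl | hij
    all_goals first
      | simp [g, hadj i, (hadj i).symm, (hadj i).ne, (hadj i).ne']; done
      | have h := hfar i j hij; simp at h; simp [g, h, hij]
  exact ⟨⟨⟨g, fun a b => (hg a b).1.1⟩, (hg _ _).2⟩, fun i => (φ i).2⟩

lemma IsInducedMatching.insert [DecidableEq V] {M : Finset (V × V)} (hM : G.IsInducedMatching M)
    {u v : V} (huv : G.Adj u v)
    (hfar : ∀ e ∈ M, ∀ w ∈ [e.1, e.2], ∀ x ∈ [u, v], x ≠ w ∧ ¬G.Adj x w) :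
    G.IsInducedMatching (insert (u, v) M) := by
  refine ⟨by simpa [huv] using hM.adj, ?_⟩
  rw [coe_insert, Set.pairwise_insert]
  refine ⟨hM.far, fun e he _ => ⟨fun x hx w hw => hfar e he w hw x hx, fun w hw x hx => ?_⟩⟩
  obtain ⟨hne, hnadj⟩ := hfar e he w hw x hx
  exact ⟨hne.symm, fun h => hnadj h.symm⟩

lemma isInducedMatching_image_pair [DecidableEq V] {S : Finset V} {z : V → V}
    (hS : G.IsIndepSet S) (hzS : G.IsIndepSet (S.image z)) (hz : ∀ a ∈ S, G.Adj a (z a))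
    (hzinj : Set.InjOn z S) (hpriv : ∀ a ∈ S, ∀ b ∈ S, a ≠ b → a ≠ z b ∧ ¬G.Adj a (z b)) :
    G.IsInducedMatching (S.image fun a => (a, z a)) := by
  refine ⟨by simpa using hz, ?_⟩
  simp only [coe_image]
  rintro _ ⟨a, ha, rfl⟩ _ ⟨b, hb, rfl⟩ hne
  have hab : a ≠ b := fun h => hne (h ▸ rfl)
  have hzab : z a ≠ z b := hzinj.ne ha hb hab
  obtain ⟨h₁, h₂⟩ := hpriv a ha b hb hab
  obtain ⟨h₃, h₄⟩ := hpriv b hb a ha hab.symm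
  simp only [List.mem_cons, List.not_mem_nil, or_false, forall_eq_or_imp, forall_eq]
  refine ⟨⟨⟨hab, hS ha hb hab⟩, h₁, h₂⟩, ⟨h₃.symm, fun h => h₄ h.symm⟩, hzab, ?_⟩
  exact hzS (mem_image_of_mem z ha) (mem_image_of_mem z hb) hzab

/-- The binomial upper bound for the Ramsey number `R(s, t)`. -/
def ramseyBound (s t : ℕ) : ℕ := (s + t).choose s

lemma ramseyBound_pos (s t : ℕ) : 0 < ramseyBound s t := Nat.choose_pos (Nat.le_add_right s t)

lemma ramseyBound_succ_succ (s t : ℕ) :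
    ramseyBound (s + 1) (t + 1) = ramseyBound s (t + 1) + ramseyBound (s + 1) t := by
  simp only [ramseyBound]
  rw [show s + 1 + (t + 1) = s + t + 1 + 1 by omega, Nat.choose_succ_succ,
    show s + (t + 1) = s + t + 1 by omega, show s + 1 + t = s + t + 1 by omega]

variable (G) in
theorem exists_isNClique_or_isNIndepSet (s t : ℕ) (A : Finset V) (hA : ramseyBound s t ≤ #A) :
    (∃ B ⊆ A, G.IsNClique s B) ∨ ∃ B ⊆ A, G.IsNIndepSet t B := by
  classical
  induction s generalizing t A with
  | zero => exact .inl ⟨∅, empty_subset _, by simp⟩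
  | succ s ihs =>
    induction t generalizing A with
    | zero => exact .inr ⟨∅, empty_subset _, by simp [← isNClique_compl]⟩
    | succ t iht =>
      obtain ⟨a, ha⟩ := card_pos.1 ((ramseyBound_pos _ _).trans_le hA)
      set A₁ := {x ∈ A.erase a | G.Adj a x}
      set A₂ := {x ∈ A.erase a | ¬G.Adj a x}
      have hA₁ : A₁ ⊆ A := (filter_subset _ _).trans (erase_subset _ _)
      have hA₂ : A₂ ⊆ A := (filter_subset _ _).trans (erase_subset _ _)
      have hsplit : #A₁ + #A₂ + 1 = #A := by
        rw [card_filter_add_card_filter_not, card_erase_add_one ha]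
      rw [ramseyBound_succ_succ] at hA
      rcases (by omega : ramseyBound s (t + 1) ≤ #A₁ ∨ ramseyBound (s + 1) t ≤ #A₂) with h | h
      · rcases ihs (t + 1) A₁ h with ⟨B, hB, hBc⟩ | ⟨B, hB, hBi⟩
        · exact .inl ⟨insert a B, insert_subset ha (hB.trans hA₁),
            hBc.insert fun b hb => (mem_filter.1 (hB hb)).2⟩
        · exact .inr ⟨B, hB.trans hA₁, hBi⟩
      · rcases iht A₂ h with ⟨B, hB, hBc⟩ | ⟨B, hB, hBi⟩
        · exact .inl ⟨B, hB.trans hA₂, hBc⟩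
        · refine .inr ⟨insert a B, insert_subset ha (hB.trans hA₂), ?_⟩
          rw [← isNClique_compl] at hBi ⊢
          refine hBi.insert fun b hb => ?_
          obtain ⟨hb, hnadj⟩ := mem_filter.1 (hB hb)
          exact (compl_adj G a b).2 ⟨(ne_of_mem_erase hb).symm, hnadj⟩

/-- Greedily grow an induced matching in `T`: once it cannot be extended, its vertex set `W`
meets the closed neighbourhood of every edge of `T`. -/
theorem exists_isInducedMatching_or_isIndepSet (T : Finset V) (k : ℕ) :
    (∃ M, G.IsInducedMatching M ∧ #M = k ∧ ∀ e ∈ M, e.1 ∈ T ∧ e.2 ∈ T) ∨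
      ∃ W ⊆ T, #W < 2 * k ∧ G.IsIndepSet {t | t ∈ T ∧ t ∉ W ∧ ∀ w ∈ W, ¬G.Adj w t} := by
  classical
  induction k with
  | zero => exact .inl ⟨∅, ⟨by simp, by simp⟩, rfl, by simp⟩
  | succ k ih =>
    obtain ⟨M, hM, hMk, hMT⟩ | ⟨W, hWT, hW, hind⟩ := ih
    swap
    · exact .inr ⟨W, hWT, by omega, hind⟩
    set W := M.biUnion fun e => {e.1, e.2}
    have hWM : ∀ e ∈ M, ∀ w ∈ [e.1, e.2], w ∈ W := fun e he w hw =>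
      mem_biUnion.2 ⟨e, he, by simpa using hw⟩
    by_cases hind : G.IsIndepSet {t | t ∈ T ∧ t ∉ W ∧ ∀ w ∈ W, ¬G.Adj w t}
    · refine .inr ⟨W, ?_, ?_, hind⟩
      · simpa [W, biUnion_subset, insert_subset_iff] using hMT
      · have : #W ≤ #M * 2 := card_biUnion_le_card_mul M _ 2 fun e _ => card_le_two
        omega
    · simp only [IsIndepSet, Set.Pairwise, not_forall, not_not] at hind
      obtain ⟨u, hu, v, hv, -, huv⟩ := hind
      refine .inl ⟨insert (u, v) M, hM.insert huv fun e he w hw x hx => ?_, ?_, ?_⟩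
      · have hx' : x ∉ W ∧ ∀ w ∈ W, ¬G.Adj w x := by
          simp only [List.mem_cons, List.not_mem_nil, or_false] at hx
          rcases hx with rfl | rfl
          exacts [hu.2, hv.2]
        exact ⟨fun h => hx'.1 (h ▸ hWM e he w hw), fun h => hx'.2 w (hWM e he w hw) h.symm⟩
      · rw [card_insert_of_notMem fun h => hu.2.1 (hWM _ h u (by simp)), hMk]
      · simpa [hu.1, hv.1] using hMT

lemma exists_dominator_of_not_hasInducedCopy_sTilde {n : ℕ} (hS : ¬HasInducedCopy G (STilde n))
    {c : V} {T : Finset V} (hT : ∀ t ∈ T, G.Adj c t) :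
    ∃ W ⊆ T, #W < 2 * n ∧ G.IsIndepSet {t | t ∈ T ∧ t ∉ W ∧ ∀ w ∈ W, ¬G.Adj w t} := by
  refine (exists_isInducedMatching_or_isIndepSet T n).resolve_left ?_
  rintro ⟨M, hM, hMn, hMT⟩
  obtain ⟨e, he⟩ := hM.exists_embedding hMn
  refine hS (hasInducedCopy_sTilde e (x := c) ?_)
  rintro (i | i)
  exacts [hT _ (hMT _ (he i)).1, hT _ (hMT _ (he i)).2]

lemma exists_subset_dominating_privateNeighbor {X Y : Finset V}
    (h : ∀ y ∈ Y, ∃ x ∈ X, G.Adj x y) :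
    ∃ B ⊆ X, (∀ y ∈ Y, ∃ b ∈ B, G.Adj b y) ∧
      ∀ b ∈ B, ∃ y ∈ Y, G.Adj b y ∧ ∀ b' ∈ B, b' ≠ b → ¬G.Adj b' y := by
  classical
  obtain ⟨B, ⟨hBX, hBdom⟩, hmin⟩ := (measure (card : Finset V → ℕ)).wf.has_min
    {B | B ⊆ X ∧ ∀ y ∈ Y, ∃ b ∈ B, G.Adj b y} ⟨X, subset_rfl, h⟩
  refine ⟨B, hBX, hBdom, fun b hb => ?_⟩
  by_contra! hpriv
  have hdom : ∀ y ∈ Y, ∃ b' ∈ B.erase b, G.Adj b' y := by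
    intro y hy
    obtain ⟨b', hb', hb'y⟩ := hBdom y hy
    by_cases hbb : b' = b
    · subst hbb
      obtain ⟨b'', hb'', hne, h''⟩ := hpriv y hy hb'y
      exact ⟨b'', mem_erase.2 ⟨hne, hb''⟩, h''⟩
    · exact ⟨b', mem_erase.2 ⟨hbb, hb'⟩, hb'y⟩
  exact hmin _ ⟨(erase_subset b B).trans hBX, hdom⟩ (card_erase_lt_of_mem hb)

/-- Ramsey's theorem inside `A`: an `(n - 1)`-clique would complete a `K_n` with `d`, and an
independent set together with its private neighbours contains an induced `S*_n` centred at `d`. -/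
theorem card_lt_of_privateNeighbor {n : ℕ} (hK : G.CliqueFree n)
    (hS : ¬HasInducedCopy G (SStar n)) {d : V} {A : Finset V} (hA : ∀ a ∈ A, G.Adj d a)
    {z : V → V} (hz : ∀ a ∈ A, G.Adj a (z a)) (hzd : ∀ a ∈ A, d ≠ z a ∧ ¬G.Adj d (z a))
    (hpriv : ∀ a ∈ A, ∀ b ∈ A, a ≠ b → ¬G.Adj a (z b)) :
    #A < ramseyBound (n - 1) (ramseyBound n n) := by
  classical
  have hn : n ≠ 0 := by rintro rfl; exact not_cliqueFree_zero hK
  by_contra! hAcard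
  obtain ⟨B, hBA, hB⟩ | ⟨S, hSA, hSind⟩ := exists_isNClique_or_isNIndepSet G _ _ A hAcard
  · have := hB.insert fun b hb => hA b (hBA hb)
    rw [Nat.sub_add_cancel (Nat.one_le_iff_ne_zero.2 hn)] at this
    exact hK _ this
  have hzinj : Set.InjOn z S := fun a ha b hb hab => by
    by_contra hne
    exact hpriv a (hSA ha) b (hSA hb) hne (hab ▸ hz a (hSA ha))
  obtain ⟨C, -, hC⟩ | ⟨C, hCS, hC⟩ := exists_isNClique_or_isNIndepSet G n n (S.image z)
    (by rw [card_image_of_injOn hzinj, hSind.card_eq])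
  · exact hK C hC
  obtain ⟨S', hS'S, rfl⟩ := subset_image_iff.1 hCS
  have hS'A : ∀ a ∈ S', a ∈ A := fun a ha => hSA (hS'S ha)
  have hM := isInducedMatching_image_pair (hSind.isIndepSet.mono (coe_subset.2 hS'S))
    hC.isIndepSet (fun a ha => hz a (hS'A a ha)) (hzinj.mono (coe_subset.2 hS'S))
    fun a ha b hb hab => ⟨fun h => (hzd b (hS'A b hb)).2 (h ▸ hA a (hS'A a ha)),
      hpriv a (hS'A a ha) b (hS'A b hb) hab⟩
  obtain ⟨e, he⟩ := hM.exists_embedding (n := n) (by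
    rw [card_image_of_injective _ fun a b h => (Prod.mk.inj h).1, ← hC.card_eq,
      card_image_of_injOn (hzinj.mono (coe_subset.2 hS'S))])
  have hpair : ∀ i, ∃ a ∈ A, e (.inl i) = a ∧ e (.inr i) = z a := fun i => by
    obtain ⟨a, ha, h⟩ := mem_image.1 (he i)
    exact ⟨a, hS'A a ha, (Prod.mk.inj h).1.symm, (Prod.mk.inj h).2.symm⟩
  refine hS (hasInducedCopy_sStar e (x := d) ?_ (fun i => ?_) fun i => ?_)
  · rintro (i | i) <;> obtain ⟨a, ha, hl, hr⟩ := hpair i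
    exacts [hl ▸ (hA a ha).ne, hr ▸ (hzd a ha).1]
  all_goals obtain ⟨a, ha, hl, hr⟩ := hpair i
  exacts [hl ▸ hA a ha, hr ▸ (hzd a ha).2]

lemma Connected.exists_adj_dist_eq (hconn : G.Connected) {r v : V} {i : ℕ}
    (h : G.dist r v = i + 1) : ∃ u, G.Adj u v ∧ G.dist r u = i := by
  obtain ⟨p, hp⟩ := hconn.exists_walk_length_eq_dist r v
  have hnil : ¬p.Nil := Walk.not_nil_iff_lt_length.2 (by omega)
  refine ⟨p.penultimate, p.adj_penultimate hnil, le_antisymm ?_ ?_⟩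
  · calc G.dist r p.penultimate ≤ p.dropLast.length := dist_le _
      _ = i := by rw [Walk.length_dropLast, hp, h, Nat.add_sub_cancel]
  · have := (p.adj_penultimate hnil).diff_dist_adj (u := r)
    omega

theorem exists_dominating_layer [Fintype V] (hconn : G.Connected) {n : ℕ} (hK : G.CliqueFree n)
    (hS : ¬HasInducedCopy G (SStar n)) (r : V) (i : ℕ) :
    ∃ D : Finset V, (∀ d ∈ D, G.dist r d = i) ∧
      #D ≤ ramseyBound (n - 1) (ramseyBound n n) ^ i ∧
      ∀ v, G.dist r v = i + 1 → ∃ d ∈ D, G.Adj d v := by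
  classical
  induction i with
  | zero => exact ⟨{r}, by simp, by simp, fun v hv => ⟨r, mem_singleton_self r, by simpa using hv⟩⟩
  | succ i ih =>
    obtain ⟨D, hDdist, hDcard, hDdom⟩ := ih
    obtain ⟨B, hBX, hBdom, hBpriv⟩ := exists_subset_dominating_privateNeighbor
      (X := {v | G.dist r v = i + 1}) (Y := {v | G.dist r v = i + 1 + 1}) fun y hy => by
        obtain ⟨u, hu, hud⟩ := hconn.exists_adj_dist_eq (mem_filter.1 hy).2
        exact ⟨u, mem_filter.2 ⟨mem_univ u, hud⟩, hu⟩
    have hBdist : ∀ b ∈ B, G.dist r b = i + 1 := fun b hb => (mem_filter.1 (hBX hb)).2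
    choose! z hzY hz hzpriv using hBpriv
    refine ⟨B, hBdist, ?_, fun v hv => hBdom v (mem_filter.2 ⟨mem_univ v, hv⟩)⟩
    set K := ramseyBound (n - 1) (ramseyBound n n)
    have hlt : ∀ d ∈ D, #{b ∈ B | G.Adj d b} < K := by
      intro d hd
      refine card_lt_of_privateNeighbor hK hS (fun a ha => (mem_filter.1 ha).2) (z := z)
        (fun a ha => hz a (mem_filter.1 ha).1) (fun a ha => ?_)
        fun a ha b hb hab => hzpriv b (mem_filter.1 hb).1 a (mem_filter.1 ha).1 hab
      have hzd := (mem_filter.1 (hzY a (mem_filter.1 ha).1)).2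
      have hd := hDdist d hd
      refine ⟨fun h => by rw [← h] at hzd; omega, fun h => ?_⟩
      have := h.diff_dist_adj (u := r)
      omega
    calc #B ≤ #(D.biUnion fun d => {b ∈ B | G.Adj d b}) := card_le_card fun b hb => by
            obtain ⟨d, hd, hdb⟩ := hDdom b (hBdist b hb)
            exact mem_biUnion.2 ⟨d, hd, mem_filter.2 ⟨hb, hdb⟩⟩
      _ ≤ #D * K := card_biUnion_le_card_mul _ _ _ fun d hd => (hlt d hd).le
      _ ≤ K ^ i * K := by gcongr
      _ = K ^ (i + 1) := (pow_succ _ _).symm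

theorem exists_dominating_of_dist_le [Fintype V] (hconn : G.Connected) {n : ℕ}
    (hK : G.CliqueFree n) (hS : ¬HasInducedCopy G (SStar n)) {r : V} {l : ℕ}
    (hr : ∀ v, G.dist r v ≤ l) :
    ∃ D : Finset V, #D ≤ 1 + l * ramseyBound (n - 1) (ramseyBound n n) ^ l ∧
      ∀ v, v ∈ D ∨ ∃ d ∈ D, G.Adj d v := by
  classical
  choose D _ hDcard hDdom using exists_dominating_layer hconn hK hS r
  refine ⟨insert r ((range l).biUnion D), ?_, fun v => ?_⟩
  · have := card_biUnion_le_card_mul (range l) D _ fun i hi =>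
      (hDcard i).trans (Nat.pow_le_pow_right (ramseyBound_pos _ _) (mem_range.1 hi).le)
    rw [card_range] at this
    have := card_insert_le r ((range l).biUnion D)
    omega
  · rcases Nat.eq_zero_or_eq_succ_pred (G.dist r v) with h | h
    · exact .inl (hconn.dist_eq_zero_iff.1 h ▸ mem_insert_self _ _)
    · obtain ⟨d, hd, hdv⟩ := hDdom _ v h
      have := hr v
      exact .inr ⟨d, mem_insert_of_mem (mem_biUnion.2 ⟨_, mem_range.2 (by omega), hd⟩), hdv⟩

section Partition

variable [DecidableEq V]

lemma isInducedStarSet_insert {c : V} {Z : Finset V} (hZ : Z.Nonempty)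
    (hcZ : ∀ z ∈ Z, G.Adj c z) (hind : G.IsIndepSet Z) : IsInducedStarSet G ↑(insert c Z) := by
  set φ := Z.equivFin.symm
  let e : (⊥ : SimpleGraph (Fin #Z)) ↪g G :=
    ⟨⟨Subtype.val ∘ φ, Subtype.coe_injective.comp φ.injective⟩, fun {i j} => by
      rw [bot_adj, iff_false]
      rcases eq_or_ne i j with rfl | hij
      · exact G.irrefl
      · exact hind (φ i).2 (φ j).2 (Subtype.coe_injective.ne (φ.injective.ne hij))⟩
  have he : Set.range e = Z := by
    change Set.range (Subtype.val ∘ φ) = _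
    rw [EquivLike.range_comp, Subtype.range_coe]
  obtain ⟨f, hf⟩ := exists_embedding_cone (K := _root_.starGraph #Z) (by simp [_root_.starGraph]) e
    (fun i => (hcZ _ (φ i).2).ne) (fun i => by simp [_root_.starGraph, e, hcZ _ (φ i).2])
  refine ⟨#Z, card_pos.2 hZ, ⟨?_⟩⟩
  rw [coe_insert, ← he, ← hf]
  exact f.isoInduceRange.symm

def HasStarPartition (G : SimpleGraph V) (s : Finset V) (m : ℕ) : Prop :=
  ∃ P : Finpartition s, #P.parts ≤ m ∧
    ∀ p ∈ P.parts, IsInducedStarSet G ↑p ∨ IsSingletonSet (p : Set V)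

lemma HasStarPartition.mono {s : Finset V} {m m' : ℕ} (h : G.HasStarPartition s m)
    (hm : m ≤ m') : G.HasStarPartition s m' :=
  let ⟨P, hP, hparts⟩ := h
  ⟨P, hP.trans hm, hparts⟩

lemma hasStarPartition_insert {c : V} {Z : Finset V} (hcZ : ∀ z ∈ Z, G.Adj c z)
    (hind : G.IsIndepSet Z) : G.HasStarPartition (insert c Z) 1 := by
  refine ⟨.indiscrete (insert_nonempty c Z).ne_empty, by simp, fun p hp => ?_⟩
  obtain rfl : p = insert c Z := mem_singleton.1 hp
  rcases Z.eq_empty_or_nonempty with rfl | hZ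
  · exact .inr ⟨c, by simp⟩
  · exact .inl (isInducedStarSet_insert hZ hcZ hind)

lemma HasStarPartition.of_fibers {ι : Type*} [DecidableEq ι] {s : Finset V} {I : Finset ι}
    {m : ℕ} (π : V → ι) (hπ : ∀ v ∈ s, π v ∈ I)
    (h : ∀ i ∈ I, G.HasStarPartition {v ∈ s | π v = i} m) : G.HasStarPartition s (#I * m) := by
  unfold HasStarPartition at h
  choose! P hPcard hP using h
  have hindep : I.SupIndep fun i => {v ∈ s | π v = i} :=
    supIndep_iff_pairwiseDisjoint.2 (Set.pairwiseDisjoint_filter π _ s)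
  have hsup : I.sup (fun i => {v ∈ s | π v = i}) = s := by
    rw [sup_eq_biUnion, biUnion_filter_eq_of_maps_to hπ]
  refine ⟨(Finpartition.combine P hindep).copy hsup, ?_, ?_⟩
  · calc #(I.biUnion fun i => (P i).parts) ≤ ∑ i ∈ I, #(P i).parts := card_biUnion_le
      _ ≤ #I * m := sum_le_card_nsmul _ _ _ hPcard
  · simp only [Finpartition.copy, Finpartition.combine_parts, mem_biUnion]
    rintro p ⟨i, hi, hp⟩
    exact hP i hi p hp

lemma insp_le_of_hasStarPartition [Fintype V] {m : ℕ} (h : G.HasStarPartition univ m) :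
    insp G ≤ m := by
  obtain ⟨P, hPcard, hP⟩ := h
  have hpart : IsPartitionBy (P.parts.image (↑))
      fun S => IsInducedStarSet G S ∨ IsSingletonSet S := by
    refine ⟨⟨?_, fun v => ?_⟩, ?_⟩
    · simp only [mem_image, forall_exists_index, and_imp]
      rintro _ p hp rfl
      exact hP p hp
    · obtain ⟨p, hp, hvp⟩ := P.exists_mem (mem_univ v)
      exact ⟨p, mem_image_of_mem _ hp, hvp⟩
    · simp only [mem_image, forall_exists_index, and_imp]
      rintro _ p hp rfl _ q hq rfl hpq v hvp hvq
      exact hpq (congrArg _ (P.eq_of_mem_parts hp hq hvp hvq))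
  calc insp G ≤ #(P.parts.image (↑)) := Nat.sInf_le ⟨_, rfl, hpart⟩
    _ ≤ m := card_image_le.trans hPcard

/-- Each vertex of `T` joins the part of a neighbour in `W` if it has one; the remaining ones
form a star with centre `c`. -/
lemma hasStarPartition_insert_of_dominator {c : V} {T W : Finset V} {m : ℕ} (hm : 1 ≤ m)
    (hT : ∀ t ∈ T, G.Adj c t) (hWT : W ⊆ T)
    (hZ : G.IsIndepSet {t | t ∈ T ∧ t ∉ W ∧ ∀ w ∈ W, ¬G.Adj w t})
    (h : ∀ w ∈ W, ∀ T' ⊆ T, (∀ t ∈ T', G.Adj w t) → G.HasStarPartition (insert w T') m) :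
    G.HasStarPartition (insert c T) (#(insert c W) * m) := by
  have hcW : c ∉ W := fun hc => G.irrefl (hT c (hWT hc))
  have hassign : ∀ v ∈ insert c T, ∃ i ∈ insert c W, (v ∈ insert c W → i = v) ∧
      (v ≠ i → v ∈ T ∧ (i = c → v ∉ W ∧ ∀ w ∈ W, ¬G.Adj w v) ∧ (i ≠ c → G.Adj i v)) := by
    intro v hv
    by_cases hvW : v ∈ insert c W
    · exact ⟨v, hvW, fun _ => rfl, fun h => absurd rfl h⟩
    have hvT : v ∈ T := (mem_insert.1 hv).resolve_left fun h => hvW (h ▸ mem_insert_self _ _)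
    simp only [mem_insert, not_or] at hvW
    by_cases hN : ∃ w ∈ W, G.Adj w v
    · obtain ⟨w, hw, hwv⟩ := hN
      exact ⟨w, mem_insert_of_mem hw, by simp [hvW.1, hvW.2], fun _ =>
        ⟨hvT, fun h => absurd (h ▸ hw) hcW, fun _ => hwv⟩⟩
    · push Not at hN
      exact ⟨c, mem_insert_self _ _, by simp [hvW.1, hvW.2], fun _ =>
        ⟨hvT, fun _ => ⟨hvW.2, hN⟩, fun h => absurd rfl h⟩⟩
  choose! π hπ hπfix hπfiber using hassign
  refine HasStarPartition.of_fibers π hπ fun i hi => ?_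
  have hiT : i ∈ insert c T := by
    rcases mem_insert.1 hi with rfl | hi
    exacts [mem_insert_self _ _, mem_insert_of_mem (hWT hi)]
  have hiF : i ∈ {v ∈ insert c T | π v = i} := mem_filter.2 ⟨hiT, hπfix i hiT hi⟩
  have hF : ∀ v ∈ {v ∈ insert c T | π v = i}.erase i, v ∈ T ∧
      (i = c → v ∉ W ∧ ∀ w ∈ W, ¬G.Adj w v) ∧ (i ≠ c → G.Adj i v) := by
    intro v hv
    obtain ⟨hvi, hv⟩ := mem_erase.1 hv
    obtain ⟨hvT, rfl⟩ := mem_filter.1 hv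
    exact hπfiber v hvT hvi
  rw [← insert_erase hiF]
  by_cases hic : i = c
  · subst hic
    refine (hasStarPartition_insert (fun z hz => hT _ (hF z hz).1) ?_).mono hm
    exact hZ.mono fun z hz => (⟨(hF z hz).1, (hF z hz).2.1 rfl⟩ : z ∈ T ∧ _)
  · exact h i ((mem_insert.1 hi).resolve_left hic) _ (fun v hv => (hF v hv).1)
      fun v hv => (hF v hv).2.2 hic

theorem hasStarPartition_insert_of_isClique {n : ℕ} (hK : G.CliqueFree n)
    (hS : ¬HasInducedCopy G (STilde n)) (k : ℕ) {C T : Finset V} {c : V} (hc : c ∈ C)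
    (hC : G.IsClique (C : Set V)) (hCT : ∀ x ∈ C, ∀ t ∈ T, G.Adj x t) (hk : n ≤ #C + k + 1) :
    G.HasStarPartition (insert c T) ((2 * n) ^ k) := by
  induction k generalizing C T c with
  | zero =>
    obtain rfl : T = ∅ := eq_empty_of_forall_notMem fun t ht =>
      hK.mono hk (insert t C) (IsNClique.insert ⟨hC, rfl⟩ fun x hx => (hCT x hx t ht).symm)
    exact hasStarPartition_insert (by simp) (by simp)
  | succ k ih =>
    obtain ⟨W, hWT, hW, hZ⟩ := exists_dominator_of_not_hasInducedCopy_sTilde hS (hCT c hc)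
    refine (hasStarPartition_insert_of_dominator (Nat.one_le_pow _ _ (by omega)) (hCT c hc) hWT hZ
      fun w hw T' hT' hwT' => ih (mem_insert_self w C) ?_ ?_ ?_).mono ?_
    · rw [coe_insert]
      exact hC.insert fun x hx _ => (hCT x hx w (hWT hw)).symm
    · intro x hx t ht
      rcases mem_insert.1 hx with rfl | hx
      exacts [hwT' t ht, hCT x hx t (hT' ht)]
    · rw [card_insert_of_notMem fun hwC => G.irrefl (hCT w hwC w (hWT hw))]
      omega
    · calc #(insert c W) * (2 * n) ^ k ≤ (2 * n) * (2 * n) ^ k := by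
            gcongr; exact (card_insert_le _ _).trans (by omega)
        _ = (2 * n) ^ (k + 1) := by ring

theorem hasStarPartition_univ_of_dominating [Fintype V] {n : ℕ} (hK : G.CliqueFree n)
    (hS : ¬HasInducedCopy G (STilde n)) {D : Finset V} (hD : ∀ v, v ∈ D ∨ ∃ d ∈ D, G.Adj d v) :
    G.HasStarPartition univ (#D * (2 * n) ^ (n - 1)) := by
  have hassign : ∀ v, ∃ d ∈ D, (v ∈ D → d = v) ∧ (v ≠ d → G.Adj d v) := by
    intro v
    by_cases hv : v ∈ D
    · exact ⟨v, hv, fun _ => rfl, fun h => absurd rfl h⟩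
    · obtain ⟨d, hd, hdv⟩ := (hD v).resolve_left hv
      exact ⟨d, hd, fun h => absurd h hv, fun _ => hdv⟩
  choose π hπ hπfix hπadj using hassign
  refine HasStarPartition.of_fibers π (fun v _ => hπ v) fun d hd => ?_
  have hdF : d ∈ ({v ∈ univ | π v = d} : Finset V) := mem_filter.2 ⟨mem_univ d, hπfix d hd⟩
  rw [← insert_erase hdF]
  refine hasStarPartition_insert_of_isClique hK hS (n - 1) (mem_singleton_self d) (by simp) ?_
    (by rw [card_singleton]; omega)
  intro x hx t ht
  obtain ⟨htd, ht⟩ := mem_erase.1 ht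
  obtain rfl := mem_singleton.1 hx
  obtain ⟨-, rfl⟩ := mem_filter.1 ht
  exact hπadj t htd

end Partition

end SimpleGraph

theorem statement_3_general (n l₀ : ℕ) :
    ∃ c : ℕ, ∀ (V : Type) [Fintype V] (H : SimpleGraph V),
      H.Connected →
      ¬ HasInducedCopy H (completeGraph (Fin n)) →
      ¬ HasInducedCopy H (SStar n) →
      ¬ HasInducedCopy H (STilde n) →
      (∀ u v : V, H.dist u v ≤ l₀) →
      insp H ≤ c := by
  refine ⟨(1 + l₀ * ramseyBound (n - 1) (ramseyBound n n) ^ l₀) * (2 * n) ^ (n - 1), ?_⟩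
  intro V _ H hconn hKn hSStar hSTilde hdiam
  classical
  have hK := cliqueFree_of_not_hasInducedCopy hKn
  obtain ⟨r⟩ := hconn.nonempty
  obtain ⟨D, hDcard, hD⟩ := exists_dominating_of_dist_le hconn hK hSStar (hdiam r)
  exact insp_le_of_hasStarPartition
    ((hasStarPartition_univ_of_dominating hK hSTilde hD).mono (by gcongr))

theorem statement_3 (n l₀ : ℕ) (hn : 3 ≤ n) (hl : 1 ≤ l₀) :
    ∃ c : ℕ, ∀ (V : Type) [Fintype V] (H : SimpleGraph V),
      H.Connected →
      ¬ HasInducedCopy H (completeGraph (Fin n)) →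
      ¬ HasInducedCopy H (SStar n) →
      ¬ HasInducedCopy H (STilde n) →
      (∀ u v : V, H.dist u v ≤ l₀) →
      insp H ≤ c :=
  statement_3_general n l₀
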